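/- arXiv:2503.01188 — 2 statements merged into one kernel-verified Lean document; each statement's English description precedes it below -/
import Mathlib

section
/- Let (X, Y) be an admissible balanced pair in a complete and cocomplete abelian category A. Then (X̃_E, Ch(A)) is a complete cotorsion pair in the exact category Ch(A, E): the left orthogonal of the class of all complexes (with respect to Ext¹ of Ch(A, E)) is exactly X̃_E, and every complex C admits an admissible epimorphism X ↠ C from X ∈ X̃_E with right X-acyclic kernel in each degree. -/
open CategoryTheory Category Limits ZeroObject

universe v u

namespace Paper

variable {A : Type u} [Category.{v} A] [Abelian A]

/-- Chain complexes over `A` indexed by `ℤ` (homological convention). -/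
abbrev Cx (A : Type u) [Category.{v} A] [Abelian A] := ChainComplex A ℤ

/-- A chain map is null homotopic if it is homotopic to the zero map. -/
def NullHomotopic {X Y : Cx A} (f : X ⟶ Y) : Prop := Nonempty (Homotopy f 0)

/-- A complex is contractible if its identity is null homotopic. -/
def Contractible (X : Cx A) : Prop := Nonempty (Homotopy (𝟙 X) (0 : X ⟶ X))

/-- `Hom_A(X, E)` is exact at degree `n` for every `X ∈ 𝒳`. -/
def RightAcyclicAt (𝒳 : Set A) (E : Cx A) (n : ℤ) : Prop :=
  ∀ ⦃X : A⦄, X ∈ 𝒳 → ∀ g : X ⟶ E.X n, g ≫ E.d n (n - 1) = 0 →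
    ∃ h : X ⟶ E.X (n + 1), h ≫ E.d (n + 1) n = g

/-- The complex `E` is right `𝒳`-acyclic. -/
def RightAcyclic (𝒳 : Set A) (E : Cx A) : Prop := ∀ n : ℤ, RightAcyclicAt 𝒳 E n

/-- `Hom_A(E, Y)` is exact at (cohomological) degree `n` for every `Y ∈ 𝒴`. -/
def LeftAcyclicAt (𝒴 : Set A) (E : Cx A) (n : ℤ) : Prop :=
  ∀ ⦃Y : A⦄, Y ∈ 𝒴 → ∀ g : E.X n ⟶ Y, E.d (n + 1) n ≫ g = 0 →
    ∃ h : E.X (n - 1) ⟶ Y, E.d n (n - 1) ≫ h = g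

/-- The complex `E` is left `𝒴`-acyclic. -/
def LeftAcyclic (𝒴 : Set A) (E : Cx A) : Prop := ∀ n : ℤ, LeftAcyclicAt 𝒴 E n

/-- `f : X ⟶ M` is a right `𝒳`-approximation of `M`. -/
def IsRightApprox (𝒳 : Set A) {X M : A} (f : X ⟶ M) : Prop :=
  ∀ ⦃X' : A⦄, X' ∈ 𝒳 → ∀ g : X' ⟶ M, ∃ h : X' ⟶ X, h ≫ f = g

/-- `f : M ⟶ Y` is a left `𝒴`-approximation of `M`. -/
def IsLeftApprox (𝒴 : Set A) {M Y : A} (f : M ⟶ Y) : Prop :=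
  ∀ ⦃Y' : A⦄, Y' ∈ 𝒴 → ∀ g : M ⟶ Y', ∃ h : Y ⟶ Y', f ≫ h = g

/-- `R` is an augmented `𝒳`-resolution of `M`:  `⋯ → X₁ → X₀ → M → 0`, with the
`𝒳`-objects placed in degrees `≥ 0` and `M` in degree `-1`. -/
def IsAugXRes (𝒳 : Set A) (M : A) (R : Cx A) : Prop :=
  (∀ n : ℤ, 0 ≤ n → R.X n ∈ 𝒳) ∧ (∀ n : ℤ, n < -1 → IsZero (R.X n)) ∧
    Nonempty (R.X (-1) ≅ M)

/-- `R` is an augmented `𝒴`-coresolution of `M`: `0 → M → Y⁰ → Y¹ → ⋯`, with `M` in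
degree `0` and the `𝒴`-objects in degrees `≤ -1`. -/
def IsAugYCores (𝒴 : Set A) (M : A) (R : Cx A) : Prop :=
  (∀ n : ℤ, n ≤ -1 → R.X n ∈ 𝒴) ∧ (∀ n : ℤ, 0 < n → IsZero (R.X n)) ∧
    Nonempty (R.X 0 ≅ M)

/-- A balanced pair `(𝒳, 𝒴)` of (full additive, isomorphism- and summand-closed)
subcategories of `A`. -/
structure BalancedPair (𝒳 𝒴 : Set A) : Prop where
  isoClosedX : ∀ ⦃X X' : A⦄, X ∈ 𝒳 → (X ≅ X') → X' ∈ 𝒳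
  isoClosedY : ∀ ⦃Y Y' : A⦄, Y ∈ 𝒴 → (Y ≅ Y') → Y' ∈ 𝒴
  summandClosedX : ∀ ⦃X S : A⦄, X ∈ 𝒳 → ∀ (s : S ⟶ X) (r : X ⟶ S), s ≫ r = 𝟙 S → S ∈ 𝒳
  summandClosedY : ∀ ⦃Y S : A⦄, Y ∈ 𝒴 → ∀ (s : S ⟶ Y) (r : Y ⟶ S), s ≫ r = 𝟙 S → S ∈ 𝒴
  contravariantlyFinite : ∀ M : A, ∃ X ∈ 𝒳, ∃ f : X ⟶ M, IsRightApprox 𝒳 f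
  covariantlyFinite : ∀ M : A, ∃ Y ∈ 𝒴, ∃ f : M ⟶ Y, IsLeftApprox 𝒴 f
  resolution : ∀ M : A, ∃ R : Cx A, IsAugXRes 𝒳 M R ∧ RightAcyclic 𝒳 R ∧ LeftAcyclic 𝒴 R
  coresolution : ∀ M : A, ∃ R : Cx A, IsAugYCores 𝒴 M R ∧ RightAcyclic 𝒳 R ∧ LeftAcyclic 𝒴 R

/-- The balanced pair `(𝒳, 𝒴)` is admissible: every right `𝒳`-approximation is epic and
every left `𝒴`-approximation is monic. -/
def Admissible (𝒳 𝒴 : Set A) : Prop :=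
  (∀ ⦃X M : A⦄, X ∈ 𝒳 → ∀ f : X ⟶ M, IsRightApprox 𝒳 f → Epi f) ∧
  (∀ ⦃M Y : A⦄, Y ∈ 𝒴 → ∀ f : M ⟶ Y, IsLeftApprox 𝒴 f → Mono f)

/-- A short exact sequence of `A` belonging to the exact structure `E` induced by `𝒳`:
it is exact and remains exact after applying `Hom_A(X, -)` for every `X ∈ 𝒳`. -/
def EExact (𝒳 : Set A) {D W C : A} (i : D ⟶ W) (p : W ⟶ C) : Prop :=
  ∃ w : i ≫ p = 0, (ShortComplex.mk i p w).ShortExact ∧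
    ∀ ⦃X : A⦄, X ∈ 𝒳 → ∀ g : X ⟶ C, ∃ h : X ⟶ W, h ≫ p = g

/-- A short exact sequence of complexes which is degreewise in `E`. -/
def ChEExact (𝒳 : Set A) {D W C : Cx A} (i : D ⟶ W) (p : W ⟶ C) : Prop :=
  ∀ n : ℤ, EExact 𝒳 (i.f n) (p.f n)

/-- Vanishing of `Ext¹` in the exact category `Ch(A, E)`: every admissible short exact
sequence `0 → D → W → C → 0` in `Ch(A, E)` splits. -/
def Ext1ChVanish (𝒳 : Set A) (C D : Cx A) : Prop :=
  ∀ ⦃W : Cx A⦄ (i : D ⟶ W) (p : W ⟶ C), ChEExact 𝒳 i p → ∃ r : W ⟶ D, i ≫ r = 𝟙 D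

/-- The class `Ẽ` of right `𝒳`-acyclic complexes. -/
def Etilde (𝒳 : Set A) : Set (Cx A) := {E | RightAcyclic 𝒳 E}

/-- The class `E-dw X̃` of complexes with all terms in `𝒳`. -/
def dwX (𝒳 : Set A) : Set (Cx A) := {G | ∀ n : ℤ, G.X n ∈ 𝒳}

/-- The class `E-dg X̃`: complexes with terms in `𝒳` such that every chain map to a right
`𝒳`-acyclic complex is null homotopic. -/
def EdgX (𝒳 : Set A) : Set (Cx A) :=
  {G | (∀ n : ℤ, G.X n ∈ 𝒳) ∧ ∀ E ∈ Etilde 𝒳, ∀ f : G ⟶ E, NullHomotopic f}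

/-- The right `Ext¹`-orthogonal class of `E-dw X̃` in `Ch(A, E)`. -/
def dwPerp (𝒳 : Set A) : Set (Cx A) := {C | ∀ G ∈ dwX 𝒳, Ext1ChVanish 𝒳 G C}

/-- The class `X̃_E` of right `𝒳`-acyclic complexes all of whose cycles lie in `𝒳`. -/
def XtildeE (𝒳 : Set A) : Set (Cx A) :=
  {G | RightAcyclic 𝒳 G ∧ ∀ n : ℤ, kernel (G.d n (n - 1)) ∈ 𝒳}

/-- The disk complex `Dⁿ(M)`: `M` in degrees `n` and `n - 1`, identity differential. -/
noncomputable def disk (M : A) (n : ℤ) : Cx A where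
  X k := if k = n ∨ k = n - 1 then M else 0
  d i j :=
    if h : i = n ∧ j = n - 1 then
      eqToHom (by simp [h.1, h.2])
    else 0
  shape i j hij := by
    try dsimp only
    rw [dif_neg]
    rintro ⟨rfl, rfl⟩
    exact hij (by rw [ComplexShape.down_Rel]; omega)
  d_comp_d' i j k _ _ := by
    try dsimp only
    by_cases h : j = n ∧ k = n - 1
    · rw [dif_neg (by rintro ⟨-, rfl⟩; omega : ¬(i = n ∧ j = n - 1)), zero_comp]
    · rw [dif_neg h, comp_zero]

/-- The shift `Σᵏ C`, with `(Σᵏ C)ₙ = C_{n-k}` and differential `(-1)ᵏ d`. -/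
@[simps] def shiftC (C : Cx A) (k : ℤ) : Cx A where
  X n := C.X (n - k)
  d i j := (k.negOnePow : ℤ) • C.d (i - k) (j - k)
  shape i j hij := by
    try dsimp only
    rw [C.shape, smul_zero]
    simp only [ComplexShape.down_Rel] at *
    omega
  d_comp_d' i j k _ _ := by
    try dsimp only
    rw [Preadditive.zsmul_comp, Preadditive.comp_zsmul, C.d_comp_d, smul_zero, smul_zero]

/-- Acyclicity of a complex. -/
def AcyclicCx (C : Cx A) : Prop := ∀ n : ℤ, C.ExactAt n

/-- Vanishing of the ordinary `Ext¹` in the abelian category `A`. -/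
def Ext1Vanish (X Z : A) : Prop :=
  ∀ ⦃W : A⦄ (i : Z ⟶ W) (p : W ⟶ X) (w : i ≫ p = 0),
    (ShortComplex.mk i p w).ShortExact → ∃ r : W ⟶ Z, i ≫ r = 𝟙 Z

/-- `(𝒻, 𝒞)` is a cotorsion pair in the abelian category `A`. -/
def CotorsionPair (𝒻 𝒞 : Set A) : Prop :=
  (∀ X : A, X ∈ 𝒻 ↔ ∀ Z ∈ 𝒞, Ext1Vanish X Z) ∧
  (∀ Z : A, Z ∈ 𝒞 ↔ ∀ X ∈ 𝒻, Ext1Vanish X Z)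

/-- Completeness of a cotorsion pair. -/
def CompletePair (𝒻 𝒞 : Set A) : Prop :=
  (∀ M : A, ∃ (Z F : A) (i : Z ⟶ F) (p : F ⟶ M) (w : i ≫ p = 0),
      (ShortComplex.mk i p w).ShortExact ∧ F ∈ 𝒻 ∧ Z ∈ 𝒞) ∧
  (∀ M : A, ∃ (Z F : A) (i : M ⟶ Z) (p : Z ⟶ F) (w : i ≫ p = 0),
      (ShortComplex.mk i p w).ShortExact ∧ Z ∈ 𝒞 ∧ F ∈ 𝒻)

/-- Heredity of a cotorsion pair. -/
def HereditaryPair (𝒻 𝒞 : Set A) : Prop :=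
  (∀ ⦃X Y Z : A⦄ (i : X ⟶ Y) (p : Y ⟶ Z) (w : i ≫ p = 0),
      (ShortComplex.mk i p w).ShortExact → Y ∈ 𝒻 → Z ∈ 𝒻 → X ∈ 𝒻) ∧
  (∀ ⦃X Y Z : A⦄ (i : X ⟶ Y) (p : Y ⟶ Z) (w : i ≫ p = 0),
      (ShortComplex.mk i p w).ShortExact → X ∈ 𝒞 → Y ∈ 𝒞 → Z ∈ 𝒞)

/-- A complete hereditary cotorsion triple `(𝒳, 𝒵, 𝒴)`. -/
def CotorsionTriple (𝒳 𝒵 𝒴 : Set A) : Prop :=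
  CotorsionPair 𝒳 𝒵 ∧ CotorsionPair 𝒵 𝒴 ∧
  CompletePair 𝒳 𝒵 ∧ CompletePair 𝒵 𝒴 ∧
  HereditaryPair 𝒳 𝒵 ∧ HereditaryPair 𝒵 𝒴

/-!
A complex `G ∈ X̃_E` is split exact, each term splitting as `Zₙ ⊕ Zₙ₋₁` with cycles `Zₙ ∈ 𝒳`; hence
`G` is contractible and every `E`-admissible epimorphism `p : W ↠ G` has degreewise sections `σ`.
A contracting homotopy `h` turns these into the chain section `d h σ + h σ d` of `p`, so every
admissible extension of `G` splits. Conversely, right `𝒳`-approximations `Xₙ → Cₙ` assemble into an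
admissible epimorphism `⨁ₙ Dⁿ(Xₙ) ↠ C` from a sum of disks; when `Ext¹(G, -)` vanishes this
epimorphism onto `G` splits, so `G` is a retract of a sum of disks and lies in `X̃_E`.
-/

lemma exists_section_of_homotopy_id_zero {V : Type*} [Category V] [Preadditive V] {ι : Type*}
    {c : ComplexShape ι} {G W : HomologicalComplex V c} (h : Homotopy (𝟙 G) 0) (p : W ⟶ G)
    (σ : ∀ i, G.X i ⟶ W.X i) (hσ : ∀ i, σ i ≫ p.f i = 𝟙 (G.X i)) :
    ∃ s : G ⟶ W, s ≫ p = 𝟙 G := by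
  refine ⟨Homotopy.nullHomotopicMap fun i j => h.hom i j ≫ σ j, ?_⟩
  rw [Homotopy.nullHomotopicMap_comp]
  simp only [assoc, hσ, comp_id]
  ext i
  simpa [Homotopy.nullHomotopicMap] using (h.comm i).symm

section

variable {𝒳 : Set A}

lemma homotopy_comm_down {G W : Cx A} {f g : G ⟶ W} (h : Homotopy f g) (n : ℤ) :
    f.f n = G.d n (n - 1) ≫ h.hom (n - 1) n + h.hom n (n + 1) ≫ W.d (n + 1) n + g.f n := by
  rw [h.comm n, dNext_eq h.hom (by simp : (ComplexShape.down ℤ).Rel n (n - 1)),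
    prevD_eq h.hom (by simp : (ComplexShape.down ℤ).Rel (n + 1) n)]

lemma contractible_of_exists_lift_kernel_ι {G : Cx A}
    (ht : ∀ i j, (ComplexShape.down ℤ).Rel j i →
      ∃ t : kernel (G.d i (i - 1)) ⟶ G.X j, t ≫ G.d j i = kernel.ι _) :
    Contractible G := by
  choose t ht using ht
  let q (i : ℤ) : G.X i ⟶ kernel (G.d (i - 1) (i - 1 - 1)) :=
    kernel.lift _ (G.d i (i - 1)) (G.d_comp_d _ _ _)
  have hρ (i : ℤ) : (𝟙 (G.X i) - q i ≫ t (i - 1) i (by simp)) ≫ G.d i (i - 1) = 0 := by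
    simp [q, ht]
  -- `ρ` projects `Gᵢ` onto its cycles along the complement `t ∘ q`, so `ρ ≫ t` contracts `G`
  let ρ (i : ℤ) : G.X i ⟶ kernel (G.d i (i - 1)) := kernel.lift _ _ (hρ i)
  have hιq (i : ℤ) : kernel.ι (G.d i (i - 1)) ≫ q i = 0 := by
    ext
    simp [q]
  have hιρ (i : ℤ) : kernel.ι _ ≫ ρ i = 𝟙 _ := by
    ext
    simp [ρ, reassoc_of% hιq]
  refine ⟨(Homotopy.ofEq ?_).trans (Homotopy.nullHomotopy' fun i j hij => ρ i ≫ t i j hij)⟩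
  ext n
  rw [Homotopy.nullHomotopicMap'_f (by simp : (ComplexShape.down ℤ).Rel (n + 1) n)
    (by simp : (ComplexShape.down ℤ).Rel n (n - 1))]
  have hq : G.d n (n - 1) = q n ≫ kernel.ι _ := (kernel.lift_ι _ _ _).symm
  simp [hq, reassoc_of% hιρ, ht, ρ]

lemma contractible_of_mem_XtildeE {G : Cx A} (hG : G ∈ XtildeE 𝒳) : Contractible G :=
  contractible_of_exists_lift_kernel_ι fun i _ hij => by
    obtain rfl : _ = i + 1 := hij.symm
    exact hG.1 i (hG.2 i) _ (kernel.condition _)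

lemma exists_section_f_of_homotopy {G W : Cx A} (h : Homotopy (𝟙 G) 0)
    (hZ : ∀ n, kernel (G.d n (n - 1)) ∈ 𝒳) (p : W ⟶ G)
    (hlift : ∀ n, ∀ ⦃X : A⦄, X ∈ 𝒳 → ∀ g : X ⟶ G.X n, ∃ l : X ⟶ W.X n, l ≫ p.f n = g)
    (n : ℤ) :
    ∃ σ : G.X n ⟶ W.X n, σ ≫ p.f n = 𝟙 (G.X n) := by
  have hid := homotopy_comm_down h n
  simp only [HomologicalComplex.id_f, HomologicalComplex.zero_f_apply, add_zero] at hid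
  -- both summands of `𝟙 = d h + h d` factor through cycles, which lie in `𝒳`
  obtain ⟨l₁, hl₁⟩ := hlift n (hZ (n - 1)) (kernel.ι _ ≫ h.hom (n - 1) n)
  obtain ⟨l₂, hl₂⟩ := hlift n (hZ n) (kernel.ι _)
  refine ⟨kernel.lift _ (G.d n (n - 1)) (G.d_comp_d _ _ _) ≫ l₁ +
    h.hom n (n + 1) ≫ kernel.lift _ (G.d (n + 1) n) (G.d_comp_d _ _ _) ≫ l₂, ?_⟩
  simp [hl₁, hl₂, hid]

lemma ChEExact.comp_eq_zero {D W C : Cx A} {i : D ⟶ W} {p : W ⟶ C} (h : ChEExact 𝒳 i p) :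
    i ≫ p = 0 := by
  ext n
  exact (h n).1

lemma ChEExact.shortExact {D W C : Cx A} {i : D ⟶ W} {p : W ⟶ C} (h : ChEExact 𝒳 i p) :
    (ShortComplex.mk i p h.comp_eq_zero).ShortExact :=
  HomologicalComplex.shortExact_of_degreewise_shortExact _ fun n => (h n).2.1

lemma ChEExact.exists_lift {D W C : Cx A} {i : D ⟶ W} {p : W ⟶ C} (h : ChEExact 𝒳 i p)
    (n : ℤ) ⦃X : A⦄ (hX : X ∈ 𝒳) (g : X ⟶ C.X n) : ∃ l : X ⟶ W.X n, l ≫ p.f n = g :=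
  (h n).2.2 hX g

theorem ext1ChVanish_of_mem_XtildeE {G : Cx A} (hG : G ∈ XtildeE 𝒳) (D : Cx A) :
    Ext1ChVanish 𝒳 G D := by
  intro W i p hip
  obtain ⟨h⟩ := contractible_of_mem_XtildeE hG
  choose σ hσ using exists_section_f_of_homotopy h hG.2 p hip.exists_lift
  obtain ⟨s, hs⟩ := exists_section_of_homotopy_id_zero h p σ hσ
  have hS := hip.shortExact
  exact ⟨_, (ShortComplex.Splitting.ofExactOfSection _ hS.exact s hs hS.mono_f).f_r⟩

lemma RightAcyclic.of_retract {G X : Cx A} (hX : RightAcyclic 𝒳 X) (s : G ⟶ X) (p : X ⟶ G)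
    (hsp : s ≫ p = 𝟙 G) : RightAcyclic 𝒳 G := by
  intro n Y hY g hg
  obtain ⟨h, hh⟩ := hX n hY (g ≫ s.f n) (by rw [assoc, s.comm, reassoc_of% hg, zero_comp])
  refine ⟨h ≫ p.f (n + 1), ?_⟩
  rw [assoc, p.comm, reassoc_of% hh]
  simp [← HomologicalComplex.comp_f, hsp]

lemma mem_XtildeE_of_retract
    (hsum : ∀ ⦃X S : A⦄, X ∈ 𝒳 → ∀ (s : S ⟶ X) (r : X ⟶ S), s ≫ r = 𝟙 S → S ∈ 𝒳)
    {G X : Cx A} (hX : X ∈ XtildeE 𝒳) (s : G ⟶ X) (p : X ⟶ G) (hsp : s ≫ p = 𝟙 G) :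
    G ∈ XtildeE 𝒳 := by
  refine ⟨hX.1.of_retract s p hsp, fun n => hsum (hX.2 n)
    (kernel.map _ _ (s.f n) (s.f (n - 1)) (s.comm _ _).symm)
    (kernel.map _ _ (p.f n) (p.f (n - 1)) (p.comm _ _).symm) ?_⟩
  ext
  simp [← HomologicalComplex.comp_f, hsp]

/-- `⨁ₙ Dⁿ(Mₙ)`, where the disk `Dⁿ(Mₙ)` has `Mₙ` in degrees `n` and `n - 1`. -/
noncomputable abbrev diskSum (M : ℤ → A) : Cx A where
  X n := M n ⊞ M (n + 1)
  d i j := if h : i = j + 1 then biprod.fst ≫ eqToHom (congrArg M h) ≫ biprod.inr else 0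
  shape i j hij := dif_neg fun h => hij (by simp [h])
  d_comp_d' i j k _ _ := by split_ifs <;> simp

lemma diskSum_d (M : ℤ → A) {i j : ℤ} (h : i = j + 1) :
    (diskSum M).d i j = biprod.fst ≫ eqToHom (congrArg M h) ≫ biprod.inr :=
  dif_pos h

@[simp]
lemma diskSum_d_add_one (M : ℤ → A) (n : ℤ) :
    (diskSum M).d (n + 1) n = biprod.fst ≫ biprod.inr := by
  rw [diskSum_d M rfl, eqToHom_refl, id_comp]

lemma comp_diskSum_d_eq_zero_iff (M : ℤ → A) {n : ℤ} {Y : A} (g : Y ⟶ M n ⊞ M (n + 1)) :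
    g ≫ (diskSum M).d n (n - 1) = 0 ↔ g ≫ biprod.fst = 0 := by
  rw [diskSum_d M (show n = n - 1 + 1 by omega), ← assoc]
  exact ⟨zero_of_comp_mono _, fun h => by rw [h, zero_comp]⟩

lemma rightAcyclic_diskSum (M : ℤ → A) : RightAcyclic 𝒳 (diskSum M) := by
  intro n Y _ g hg
  rw [comp_diskSum_d_eq_zero_iff] at hg
  refine ⟨g ≫ biprod.snd ≫ biprod.inl, ?_⟩
  conv_rhs => rw [← comp_id g, ← biprod.total, Preadditive.comp_add, reassoc_of% hg, zero_comp,
    zero_add]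
  simp

lemma diskSum_mem_XtildeE (hiso : ∀ ⦃X X' : A⦄, X ∈ 𝒳 → (X ≅ X') → X' ∈ 𝒳) {M : ℤ → A}
    (hM : ∀ n, M n ∈ 𝒳) : diskSum M ∈ XtildeE 𝒳 := by
  refine ⟨rightAcyclic_diskSum M, fun n => ?_⟩
  have h : n = n - 1 + 1 := by omega
  exact hiso (hM _) (kernelIsoOfEq (diskSum_d M h) ≪≫
    kernelCompMono biprod.fst (eqToHom (congrArg M h) ≫ biprod.inr) ≪≫ kernelBiprodFstIso).symm

noncomputable def diskSumDesc {M : ℤ → A} {C : Cx A} (f : ∀ n, M n ⟶ C.X n) : diskSum M ⟶ C where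
  f n := biprod.desc (f n) (f (n + 1) ≫ C.d (n + 1) n)
  comm' i j hij := by
    obtain rfl : i = j + 1 := hij.symm
    ext <;> simp

@[simp]
lemma inl_diskSumDesc_f {M : ℤ → A} {C : Cx A} (f : ∀ n, M n ⟶ C.X n) (n : ℤ) :
    biprod.inl ≫ (diskSumDesc f).f n = f n :=
  biprod.inl_desc _ _

lemma chEExact_kernel_ι {W C : Cx A} (p : W ⟶ C) (hp : ∀ n, Epi (p.f n))
    (hlift : ∀ n, ∀ ⦃X : A⦄, X ∈ 𝒳 → ∀ g : X ⟶ C.X n, ∃ l : X ⟶ W.X n, l ≫ p.f n = g) :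
    ChEExact 𝒳 (kernel.ι p) p := by
  have : Epi p := HomologicalComplex.epi_of_epi_f _ hp
  have hS : (ShortComplex.mk _ _ (kernel.condition p)).ShortExact :=
    { exact := ShortComplex.exact_of_f_is_kernel _ (kernelIsKernel p) }
  intro n
  exact ⟨_, (HomologicalComplex.shortExact_iff_degreewise_shortExact _).1 hS n, hlift n⟩

theorem exists_XtildeE_precover (hiso : ∀ ⦃X X' : A⦄, X ∈ 𝒳 → (X ≅ X') → X' ∈ 𝒳)
    (happrox : ∀ M : A, ∃ X ∈ 𝒳, ∃ f : X ⟶ M, IsRightApprox 𝒳 f ∧ Epi f) (C : Cx A) :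
    ∃ (K G : Cx A) (i : K ⟶ G) (p : G ⟶ C), G ∈ XtildeE 𝒳 ∧ ChEExact 𝒳 i p := by
  choose M hM f hf hepi using fun n => happrox (C.X n)
  refine ⟨_, _, _, diskSumDesc f, diskSum_mem_XtildeE hiso hM,
    chEExact_kernel_ι _ (fun n => epi_of_epi_fac (inl_diskSumDesc_f f n)) fun n X hX g => ?_⟩
  obtain ⟨l, hl⟩ := hf n hX g
  exact ⟨l ≫ biprod.inl, by simp [hl]⟩

end

theorem stmt_14_general {A : Type u} [Category.{v} A] [Abelian A]
    (𝒳 𝒴 : Set A) (hbp : BalancedPair 𝒳 𝒴) (hadm : Admissible 𝒳 𝒴) :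
    (∀ G : Cx A, G ∈ XtildeE 𝒳 ↔ ∀ D : Cx A, Ext1ChVanish 𝒳 G D) ∧
    (∀ C : Cx A, ∃ (K G : Cx A) (i : K ⟶ G) (p : G ⟶ C),
      G ∈ XtildeE 𝒳 ∧ ChEExact 𝒳 i p) := by
  have hprecover := exists_XtildeE_precover hbp.isoClosedX fun M => by
    obtain ⟨X, hX, f, hf⟩ := hbp.contravariantlyFinite M
    exact ⟨X, hX, f, hf, hadm.1 hX f hf⟩
  refine ⟨fun G => ⟨fun hG => ext1ChVanish_of_mem_XtildeE hG, fun hext => ?_⟩, hprecover⟩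
  obtain ⟨K, X, i, p, hX, hip⟩ := hprecover G
  obtain ⟨r, hr⟩ := hext K i p hip
  have hS := hip.shortExact
  exact mem_XtildeE_of_retract hbp.summandClosedX hX _ p
    (ShortComplex.Splitting.ofExactOfRetraction _ hS.exact r hr hS.epi_g).s_g

/-- `(X̃_E, Ch(A))` is a complete cotorsion pair in `Ch(A, E)`. -/
theorem stmt_14 {A : Type u} [Category.{v} A] [Abelian A] [HasLimits A] [HasColimits A]
    (𝒳 𝒴 : Set A) (hbp : BalancedPair 𝒳 𝒴) (hadm : Admissible 𝒳 𝒴) :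
    (∀ G : Cx A, G ∈ XtildeE 𝒳 ↔ ∀ D : Cx A, Ext1ChVanish 𝒳 G D) ∧
    (∀ C : Cx A, ∃ (K G : Cx A) (i : K ⟶ G) (p : G ⟶ C),
      G ∈ XtildeE 𝒳 ∧ ChEExact 𝒳 i p) :=
  stmt_14_general 𝒳 𝒴 hbp hadm

end Paper
end

section
/- Let (X, Y) be an admissible balanced pair in a complete and cocomplete abelian category A. Then E-dwX̃ ∩ (E-dwX̃)⊥ = X̃_E: a complex with all terms in X that is right orthogonal (in Ch(A, E)) to all complexes with terms in X is precisely a contractible complex of the form ⊕ Dⁿ(X') with X' ∈ X, and conversely. -/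
open CategoryTheory Category Limits ZeroObject

universe v u

namespace Paper

variable {A : Type u} [Category.{v} A] [Abelian A]

/-!
A complex `G` with terms in `𝒳` that is right orthogonal to `E-dw X̃` splits the degreewise
split sequence `G → cone(𝟙 G) → ΣG`, because `ΣG` also has terms in `𝒳`; a retraction of
`G → cone(𝟙 G)` turns the canonical null-homotopy of that map into a contracting homotopy `s`
of `G`. For a contracting homotopy, `e = d ∘ s` is an idempotent on each `Gₙ` whose image is
the cycles, and `d` maps `Fₙ₊₁ := ker eₙ₊₁` isomorphically onto them, so `Gₙ ≅ Fₙ ⊕ Fₙ₊₁`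
compatibly with the differentials, i.e. `G ≅ ⊕ₙ Dⁿ(Fₙ)`, with each `Fₙ` a summand of `Gₙ`.

Conversely, a sum of disks is contractible, and a contractible complex `C` is injective with
respect to degreewise split monomorphisms `i : C → W`: if `ρ` is a degreewise retraction of `i`,
then `d ρ s + s ρ d` is a chain retraction.
-/

lemma BalancedPair.biprod_mem {𝒳 𝒴 : Set A} (hbp : BalancedPair 𝒳 𝒴)
    {X X' : A} (h : X ∈ 𝒳) (h' : X' ∈ 𝒳) : (X ⊞ X') ∈ 𝒳 := by
  obtain ⟨X'', hX'', f, hf⟩ := hbp.contravariantlyFinite (X ⊞ X')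
  obtain ⟨h₁, hh₁⟩ := hf h biprod.inl
  obtain ⟨h₂, hh₂⟩ := hf h' biprod.inr
  refine hbp.summandClosedX hX'' (biprod.desc h₁ h₂) f ?_
  apply biprod.hom_ext' <;> simp [hh₁, hh₂]

lemma EExact.exists_retraction {𝒳 : Set A} {D W C : A} {i : D ⟶ W} {p : W ⟶ C}
    (h : EExact 𝒳 i p) (hC : C ∈ 𝒳) : ∃ ρ : W ⟶ D, i ≫ ρ = 𝟙 D := by
  obtain ⟨w, hSE, hlift⟩ := h
  obtain ⟨s, hs⟩ := hlift hC (𝟙 C)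
  exact ⟨_, (ShortComplex.Splitting.ofExactOfSection _ hSE.exact s hs hSE.mono_f).f_r⟩

lemma Contractible.exists_retraction {C W : Cx A} (hC : Contractible C) (i : C ⟶ W)
    (ρ : ∀ n, W.X n ⟶ C.X n) (hρ : ∀ n, i.f n ≫ ρ n = 𝟙 (C.X n)) :
    ∃ r : W ⟶ C, i ≫ r = 𝟙 C := by
  obtain ⟨h⟩ := hC
  refine ⟨Homotopy.nullHomotopicMap fun p q => ρ p ≫ h.hom p q, ?_⟩
  rw [Homotopy.comp_nullHomotopicMap]
  ext n
  simp [reassoc_of% hρ, h.comm n, Homotopy.nullHomotopicMap]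

lemma Contractible.mem_dwPerp (𝒳 : Set A) {C : Cx A} (hC : Contractible C) :
    C ∈ dwPerp 𝒳 := by
  intro G hG W i p hip
  choose ρ hρ using fun n => (hip n).exists_retraction (hG n)
  exact hC.exists_retraction i ρ hρ

lemma Contractible.of_iso {C D : Cx A} (e : C ≅ D) (hD : Contractible D) : Contractible C := by
  obtain ⟨h⟩ := hD
  exact ⟨(Homotopy.ofEq (by simp)).trans
    (((h.compLeft e.hom).compRight e.inv).trans (Homotopy.ofEq (by simp)))⟩

section Cone

open HomologicalComplex

noncomputable def coneToShift (G : Cx A) : homotopyCofiber (𝟙 G) ⟶ shiftC G 1 where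
  f n := homotopyCofiber.fstX (𝟙 G) n (n - 1) (by simp)
  comm' i j hij := by
    obtain rfl : j = i - 1 := by simp at hij; omega
    refine Eq.trans ?_ (homotopyCofiber.d_fstX (𝟙 G) i (i - 1) (i - 1 - 1) hij (by simp)).symm
    simp only [shiftC_d, Int.negOnePow_one, Units.val_neg, Units.val_one, neg_smul, one_smul]
    exact Preadditive.comp_neg _ _

lemma chEExact_inr_coneToShift (𝒳 : Set A) (G : Cx A) :
    ChEExact 𝒳 (homotopyCofiber.inr (𝟙 G)) (coneToShift G) := by
  intro n
  have hn : (ComplexShape.down ℤ).Rel n (n - 1) := by simp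
  let s : ShortComplex.Splitting
      (ShortComplex.mk _ _ (homotopyCofiber.inrX_fstX (𝟙 G) n (n - 1) hn)) :=
    { r := homotopyCofiber.sndX (𝟙 G) n
      s := homotopyCofiber.inlX (𝟙 G) (n - 1) n hn
      f_r := homotopyCofiber.inrX_sndX _ _
      s_g := homotopyCofiber.inlX_fstX _ _ _ _
      id := by
        apply homotopyCofiber.ext_from_X (𝟙 G) (n - 1) n hn <;> simp }
  exact ⟨_, s.shortExact, fun X _ g =>
    ⟨g ≫ s.s, (assoc _ _ _).trans ((g ≫= s.s_g).trans (comp_id g))⟩⟩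

lemma contractible_of_ext1ChVanish_shift (𝒳 : Set A) (G : Cx A)
    (hG : Ext1ChVanish 𝒳 (shiftC G 1) G) : Contractible G := by
  obtain ⟨r, hr⟩ := hG _ _ (chEExact_inr_coneToShift 𝒳 G)
  have h := (homotopyCofiber.inrCompHomotopy (𝟙 G) fun j => ⟨j + 1, by simp⟩).compRight r
  exact ⟨(Homotopy.ofEq (by simp [hr])).trans (h.trans (Homotopy.ofEq (by simp)))⟩

end Cone

lemma disk_X_self (M : A) (n : ℤ) : (disk M n).X n = M := if_pos (Or.inl rfl)

lemma disk_X_of_eq_sub_one (M : A) {n k : ℤ} (h : k = n - 1) : (disk M n).X k = M :=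
  if_pos (Or.inr h)

lemma isZero_disk_X (M : A) {n k : ℤ} (h : k ≠ n) (h' : k ≠ n - 1) :
    IsZero ((disk M n).X k) := by
  change IsZero (if k = n ∨ k = n - 1 then M else 0)
  rw [if_neg (by tauto)]
  exact isZero_zero A

lemma disk_d (M : A) {n k : ℤ} (h : k = n - 1) :
    (disk M n).d n k = eqToHom (by rw [disk_X_self, disk_X_of_eq_sub_one M h]) :=
  dif_pos ⟨rfl, h⟩

lemma disk_d_of_ne (M : A) {n i j : ℤ} (h : i ≠ n) : (disk M n).d i j = 0 :=
  dif_neg (by tauto)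

lemma disk.hom_ext {M : A} {n : ℤ} {K : Cx A} {f g : disk M n ⟶ K} (h : f.f n = g.f n) :
    f = g := by
  ext k
  by_cases hk : k = n
  · subst hk; exact h
  by_cases hk' : k = n - 1
  · have : IsIso ((disk M n).d n k) := by rw [disk_d M hk']; infer_instance
    rw [← cancel_epi ((disk M n).d n k), ← f.comm, ← g.comm, h]
  · exact (isZero_disk_X M hk hk').eq_of_src _ _

noncomputable def disk.desc {M : A} {n : ℤ} {K : Cx A} (g : M ⟶ K.X n) : disk M n ⟶ K where
  f k :=
    if h : k = n then eqToHom (by rw [h, disk_X_self]) ≫ g ≫ eqToHom (by rw [h])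
    else if h' : k = n - 1 then eqToHom (disk_X_of_eq_sub_one M h') ≫ g ≫ K.d n k
    else 0
  comm' i j hij := by
    obtain rfl : i = j + 1 := by simp at hij; omega
    by_cases hi : j + 1 = n
    · subst hi
      rw [dif_pos rfl, dif_neg (by omega), dif_pos (by omega), disk_d M (by omega)]
      simp
    · rw [disk_d_of_ne M hi, zero_comp]
      by_cases hi' : j + 1 = n - 1
      · rw [dif_neg hi, dif_pos hi']
        simp
      · rw [dif_neg hi, dif_neg hi', zero_comp]

lemma disk.desc_f_self {M : A} {n : ℤ} {K : Cx A} (g : M ⟶ K.X n) :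
    (disk.desc g).f n = eqToHom (disk_X_self M n) ≫ g := by
  simp [disk.desc]

lemma disk.desc_f_of_eq_sub_one {M : A} {n k : ℤ} {K : Cx A} (g : M ⟶ K.X n) (h : k = n - 1) :
    (disk.desc g).f k = eqToHom (disk_X_of_eq_sub_one M h) ≫ g ≫ K.d n k :=
  (dif_neg (by omega)).trans (dif_pos h)

noncomputable abbrev sumDisk (F : ℤ → A) : Cx A where
  X n := F n ⊞ F (n + 1)
  d i j := if h : j + 1 = i then biprod.fst ≫ eqToHom (congrArg F h.symm) ≫ biprod.inr else 0
  shape i j hij := dif_neg (by simpa using hij)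
  d_comp_d' i j k hij hjk := by
    rw [dif_pos (by simpa using hij), dif_pos (by simpa using hjk)]
    simp

lemma sumDisk_d (F : ℤ → A) (n : ℤ) : (sumDisk F).d (n + 1) n = biprod.fst ≫ biprod.inr := by
  simp [sumDisk]

lemma contractible_sumDisk (F : ℤ → A) : Contractible (sumDisk F) := by
  refine ⟨{
    hom := fun i j => if h : i + 1 = j then
      biprod.snd ≫ eqToHom (congrArg F h) ≫ (biprod.inl : F j ⟶ (sumDisk F).X j) else 0
    zero := fun i j hij => dif_neg (by simpa [eq_comm] using hij)
    comm := fun i => ?_ }⟩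
  obtain ⟨m, rfl⟩ : ∃ m, i = m + 1 := ⟨i - 1, by omega⟩
  rw [dNext_eq _ (show (ComplexShape.down ℤ).Rel (m + 1) m by simp),
    prevD_eq _ (show (ComplexShape.down ℤ).Rel (m + 1 + 1) (m + 1) by simp),
    dif_pos rfl, dif_pos rfl, sumDisk_d, sumDisk_d]
  simp

noncomputable def sumDiskIsoCoprod [HasColimits A] (F : ℤ → A) :
    sumDisk F ≅ ∐ fun n => disk (F n) n where
  hom :=
    { f := fun n => biprod.desc
        (eqToHom (disk_X_self (F n) n).symm ≫ (Sigma.ι (fun n => disk (F n) n) n).f n)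
        (eqToHom (disk_X_of_eq_sub_one (F (n + 1)) (by omega)).symm ≫
          (Sigma.ι (fun n => disk (F n) n) (n + 1)).f n)
      comm' := fun i n hin => by
        obtain rfl : i = n + 1 := by simp at hin; omega
        rw [sumDisk_d]
        apply biprod.hom_ext'
        · rw [biprod.inl_desc_assoc, assoc, (Sigma.ι (fun n => disk (F n) n) (n + 1)).comm,
            disk_d _ (show n = n + 1 - 1 by omega)]
          simp
        · rw [biprod.inr_desc_assoc, assoc, (Sigma.ι (fun n => disk (F n) n) (n + 1 + 1)).comm,
            disk_d_of_ne _ (show n + 1 ≠ n + 1 + 1 by omega)]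
          simp }
  inv := Sigma.desc fun m => disk.desc (biprod.inl : F m ⟶ (sumDisk F).X m)
  hom_inv_id := by
    ext n : 1
    apply biprod.hom_ext'
    · rw [HomologicalComplex.comp_f, biprod.inl_desc_assoc, assoc, ← HomologicalComplex.comp_f,
        Sigma.ι_desc, disk.desc_f_self]
      simp
    · rw [HomologicalComplex.comp_f, biprod.inr_desc_assoc, assoc, ← HomologicalComplex.comp_f,
        Sigma.ι_desc, disk.desc_f_of_eq_sub_one _ (show n = n + 1 - 1 by omega), sumDisk_d]
      simp
  inv_hom_id := Sigma.hom_ext _ _ fun m => disk.hom_ext (by simp [disk.desc_f_self])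

section Contraction

variable {G : Cx A} (h : Homotopy (𝟙 G) 0)

noncomputable def cyclesProj (n : ℤ) : G.X n ⟶ G.X n := h.hom n (n + 1) ≫ G.d (n + 1) n

lemma d_hom_add_cyclesProj (n : ℤ) :
    G.d (n + 1) n ≫ h.hom n (n + 1) + cyclesProj h (n + 1) = 𝟙 _ := by
  have := h.comm (n + 1)
  rw [dNext_eq _ (show (ComplexShape.down ℤ).Rel (n + 1) n by simp),
    prevD_eq _ (show (ComplexShape.down ℤ).Rel (n + 1 + 1) (n + 1) by simp)] at this
  simpa [cyclesProj] using this.symm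

lemma cyclesProj_d (n : ℤ) : cyclesProj h (n + 1) ≫ G.d (n + 1) n = 0 := by
  simp [cyclesProj]

lemma d_cyclesProj (n : ℤ) : G.d (n + 1) n ≫ cyclesProj h n = G.d (n + 1) n :=
  calc G.d (n + 1) n ≫ cyclesProj h n
      = (G.d (n + 1) n ≫ h.hom n (n + 1) + cyclesProj h (n + 1)) ≫ G.d (n + 1) n := by
        rw [Preadditive.add_comp, cyclesProj_d, add_zero, assoc, cyclesProj]
    _ = G.d (n + 1) n := by rw [d_hom_add_cyclesProj, id_comp]

lemma d_hom (n : ℤ) : G.d (n + 1) n ≫ h.hom n (n + 1) = 𝟙 _ - cyclesProj h (n + 1) :=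
  eq_sub_of_add_eq (d_hom_add_cyclesProj h n)

lemma cyclesProj_idem (n : ℤ) : cyclesProj h n ≫ cyclesProj h n = cyclesProj h n := by
  change (h.hom n (n + 1) ≫ G.d (n + 1) n) ≫ cyclesProj h n = _
  rw [assoc, d_cyclesProj]
  rfl

lemma cyclesProj_hom (n : ℤ) :
    cyclesProj h n ≫ h.hom n (n + 1) = h.hom n (n + 1) ≫ (𝟙 _ - cyclesProj h (n + 1)) := by
  rw [cyclesProj, assoc, d_hom]

noncomputable def toCyclesCompl (n : ℤ) : G.X n ⟶ kernel (cyclesProj h n) :=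
  kernel.lift _ (𝟙 _ - cyclesProj h n) (by simp [Preadditive.sub_comp, cyclesProj_idem])

@[simp]
lemma toCyclesCompl_ι (n : ℤ) :
    toCyclesCompl h n ≫ kernel.ι _ = 𝟙 _ - cyclesProj h n :=
  kernel.lift_ι _ _ _

@[simp]
lemma ι_toCyclesCompl (n : ℤ) : kernel.ι (cyclesProj h n) ≫ toCyclesCompl h n = 𝟙 _ := by
  simp [← cancel_mono (kernel.ι (cyclesProj h n))]

noncomputable def sumDiskXIso (n : ℤ) :
    (sumDisk fun n => kernel (cyclesProj h n)).X n ≅ G.X n where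
  hom := biprod.desc (kernel.ι _) (kernel.ι _ ≫ G.d (n + 1) n)
  inv := biprod.lift (toCyclesCompl h n)
    (kernel.lift _ (cyclesProj h n ≫ h.hom n (n + 1))
      (by simp [cyclesProj_hom, Preadditive.sub_comp, cyclesProj_idem]))
  hom_inv_id := by
    apply biprod.hom_ext' <;> apply biprod.hom_ext <;>
      simp [← cancel_mono (kernel.ι _), d_cyclesProj, reassoc_of% (d_cyclesProj h n), d_hom,
        Preadditive.comp_sub]
  inv_hom_id := by
    simp only [biprod.lift_desc, toCyclesCompl_ι, kernel.lift_ι_assoc, assoc]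
    change _ + cyclesProj h n ≫ cyclesProj h n = _
    rw [cyclesProj_idem, sub_add_cancel]

noncomputable def isoSumDisk : G ≅ sumDisk fun n => kernel (cyclesProj h n) :=
  (HomologicalComplex.Hom.isoOfComponents (sumDiskXIso h) fun i n hin => by
    obtain rfl : i = n + 1 := by simp at hin; omega
    rw [sumDisk_d]
    apply biprod.hom_ext' <;> simp [sumDiskXIso]).symm

end Contraction

theorem stmt_16_general {A : Type u} [Category.{v} A] [Abelian A] [HasColimits A]
    (𝒳 𝒴 : Set A) (hbp : BalancedPair 𝒳 𝒴) (G : Cx A) :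
    (G ∈ dwX 𝒳 ∧ G ∈ dwPerp 𝒳) ↔
      ∃ F : ℤ → A, (∀ n : ℤ, F n ∈ 𝒳) ∧ Nonempty (G ≅ ∐ fun n : ℤ => disk (F n) n) := by
  constructor
  · rintro ⟨hdw, hperp⟩
    obtain ⟨h⟩ := contractible_of_ext1ChVanish_shift 𝒳 G (hperp _ fun n => hdw (n - 1))
    refine ⟨fun n => kernel (cyclesProj h n), fun n => ?_,
      ⟨isoSumDisk h ≪≫ sumDiskIsoCoprod _⟩⟩
    exact hbp.summandClosedX (hdw n) (kernel.ι _) (toCyclesCompl h n) (ι_toCyclesCompl h n)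
  · rintro ⟨F, hF, ⟨e⟩⟩
    have e' : G ≅ sumDisk F := e ≪≫ (sumDiskIsoCoprod F).symm
    refine ⟨fun n => ?_, ((contractible_sumDisk F).of_iso e').mem_dwPerp 𝒳⟩
    exact hbp.isoClosedX (hbp.biprod_mem (hF n) (hF (n + 1)))
      ((HomologicalComplex.eval A _ n).mapIso e').symm

/-- `E-dw X̃ ∩ (E-dw X̃)^⊥ = X̃_E`: the complexes with terms in `𝒳` lying
in the right orthogonal are exactly the contractible complexes `⊕ₙ Dⁿ(X'ₙ)` with
`X'ₙ ∈ 𝒳`. -/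
theorem stmt_16 {A : Type u} [Category.{v} A] [Abelian A] [HasLimits A] [HasColimits A]
    (𝒳 𝒴 : Set A) (hbp : BalancedPair 𝒳 𝒴) (hadm : Admissible 𝒳 𝒴) (G : Cx A) :
    (G ∈ dwX 𝒳 ∧ G ∈ dwPerp 𝒳) ↔
      ∃ F : ℤ → A, (∀ n : ℤ, F n ∈ 𝒳) ∧ Nonempty (G ≅ ∐ fun n : ℤ => disk (F n) n) :=
  stmt_16_general 𝒳 𝒴 hbp G

end Paper
end
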